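/- Let X⋆ ∈ ℝ^{I₁×I₂×I₃} have tubal rank R with skinny t-SVD X⋆ = U⋆*Σ⋆*V⋆ᵀ and factors L⋆ := U⋆*Σ⋆^{1/2}, R⋆ := V⋆*Σ⋆^{1/2}. Given any L ∈ ℝ^{I₁×R×I₃}, R ∈ ℝ^{I₂×R×I₃} and any Q, Q̃ ∈ GL(R), assume ‖(L*Q − L⋆)*Σ⋆^{−1/2}‖_op ∨ ‖(R*Q^{−ᵀ} − R⋆)*Σ⋆^{−1/2}‖_op < 1. Then ‖Σ⋆^{1/2}*Q̃⁻¹*Q*Σ⋆^{1/2} − Σ⋆‖_op ≤ ‖R*(Q̃^{−ᵀ} − Q^{−ᵀ})*Σ⋆^{1/2}‖_op / (1 − ‖(R*Q^{−ᵀ} − R⋆)*Σ⋆^{−1/2}‖_op), and ‖Σ⋆^{1/2}*Q̃ᵀ*Q^{−ᵀ}*Σ⋆^{1/2} − Σ⋆‖_op ≤ ‖L*(Q̃ − Q)*Σ⋆^{1/2}‖_op / (1 − ‖(L*Q − L⋆)*Σ⋆^{−1/2}‖_op). -/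

import Mathlib

open scoped BigOperators
open Matrix

/-- An order-3 real tensor. -/
abbrev Tensor (I₁ I₂ I₃ : ℕ) := Fin I₁ → Fin I₂ → Fin I₃ → ℝ

namespace RTPCA

variable {I₁ I₂ I₃ J R : ℕ}

/-- The t-product, computed by circular convolution along the third mode
(equivalently, slice-wise products in the Fourier domain). -/
noncomputable def tprod (A : Tensor I₁ I₂ I₃) (B : Tensor I₂ J I₃) : Tensor I₁ J I₃ :=
  fun i j k => ∑ l : Fin I₂, ∑ t : Fin I₃, A i l t * B l j (k - t)

/-- The tensor transpose: transpose each frontal slice and reverse the order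
of the frontal slices 2 through I₃. -/
def tT (A : Tensor I₁ I₂ I₃) : Tensor I₂ I₁ I₃ :=
  fun j i k => A i j (-k)

/-- The identity tensor: first frontal slice is the identity, the rest are zero. -/
def idT (R I₃ : ℕ) : Tensor R R I₃ :=
  fun i j k => if i = j ∧ (k : ℕ) = 0 then 1 else 0

/-- Discrete Fourier transform along the third mode. -/
noncomputable def dft (A : Tensor I₁ I₂ I₃) (i : Fin I₁) (j : Fin I₂) (k : Fin I₃) : ℂ :=
  ∑ t : Fin I₃, (A i j t : ℂ) *
    Complex.exp (-(2 * Real.pi * Complex.I * (k.val : ℂ) * (t.val : ℂ)) / (I₃ : ℂ))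

/-- Fourier-domain frontal slice. -/
noncomputable def fSlice (A : Tensor I₁ I₂ I₃) (k : Fin I₃) : Matrix (Fin I₁) (Fin I₂) ℂ :=
  Matrix.of fun i j => dft A i j k

/-- Inverse DFT along the third mode (real part). -/
noncomputable def invDft (F : Fin I₁ → Fin I₂ → Fin I₃ → ℂ) : Tensor I₁ I₂ I₃ :=
  fun i j t =>
    ((∑ k : Fin I₃, F i j k *
      Complex.exp ((2 * Real.pi * Complex.I * (k.val : ℂ) * (t.val : ℂ)) / (I₃ : ℂ))) / (I₃ : ℂ)).re

/-- Squared Frobenius norm. -/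
noncomputable def fro2 (A : Tensor I₁ I₂ I₃) : ℝ := ∑ i, ∑ j, ∑ k, (A i j k) ^ 2

/-- Frobenius norm. -/
noncomputable def froNorm (A : Tensor I₁ I₂ I₃) : ℝ := Real.sqrt (fro2 A)

/-- Entrywise sup norm ‖A‖_∞. -/
noncomputable def infNorm (A : Tensor I₁ I₂ I₃) : ℝ := ⨆ i, ⨆ j, ⨆ k, |A i j k|

/-- ℓ_{2,∞} norm: largest ℓ₂ norm of a horizontal slice. -/
noncomputable def twoInfNorm (A : Tensor I₁ I₂ I₃) : ℝ :=
  ⨆ i, Real.sqrt (∑ j, ∑ k, (A i j k) ^ 2)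

/-- ℓ_{1,∞} norm: largest ℓ₁ norm of a horizontal slice. -/
noncomputable def oneInfNorm (A : Tensor I₁ I₂ I₃) : ℝ := ⨆ i, ∑ j, ∑ k, |A i j k|

/-- Spectral norm (largest singular value) of a complex matrix. -/
noncomputable def matSpecNorm {m n : ℕ} (M : Matrix (Fin m) (Fin n) ℂ) : ℝ :=
  ‖LinearMap.toContinuousLinearMap (Matrix.toEuclideanLin M)‖

/-- Tensor spectral norm = tensor operator norm: the largest singular value of
the Fourier-domain frontal slices. -/
noncomputable def specNorm (A : Tensor I₁ I₂ I₃) : ℝ :=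
  ⨆ k : Fin I₃, matSpecNorm (fSlice A k)

/-- f-diagonal in the Fourier domain with strictly positive diagonal entries. -/
def FDiagPos (S : Tensor R R I₃) : Prop :=
  (∀ k, ∀ i j : Fin R, i ≠ j → fSlice S k i j = 0) ∧
  (∀ k, ∀ i : Fin R, 0 < (fSlice S k i i).re ∧ (fSlice S k i i).im = 0)

/-- f-diagonal in the Fourier domain with nonnegative diagonal entries. -/
def FDiagNonneg (S : Tensor R R I₃) : Prop :=
  (∀ k, ∀ i j : Fin R, i ≠ j → fSlice S k i j = 0) ∧
  (∀ k, ∀ i : Fin R, 0 ≤ (fSlice S k i i).re ∧ (fSlice S k i i).im = 0)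

/-- Skinny t-SVD with tubal rank R (strictly positive Fourier-domain diagonal). -/
structure IsSkinnyTSVD (X : Tensor I₁ I₂ I₃) (U : Tensor I₁ R I₃)
    (S : Tensor R R I₃) (V : Tensor I₂ R I₃) : Prop where
  decomp : X = tprod (tprod U S) (tT V)
  orthU : tprod (tT U) U = idT R I₃
  orthV : tprod (tT V) V = idT R I₃
  diag : FDiagPos S

/-- Skinny t-SVD with tubal rank at most R (nonnegative diagonal allowed). -/
structure IsSkinnyTSVDLe (X : Tensor I₁ I₂ I₃) (U : Tensor I₁ R I₃)
    (S : Tensor R R I₃) (V : Tensor I₂ R I₃) : Prop where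
  decomp : X = tprod (tprod U S) (tT V)
  orthU : tprod (tT U) U = idT R I₃
  orthV : tprod (tT V) V = idT R I₃
  diag : FDiagNonneg S

/-- σ_min: the smallest Fourier-domain diagonal entry of Σ. -/
noncomputable def sigmaMin (S : Tensor R R I₃) : ℝ :=
  ⨅ k : Fin I₃, ⨅ i : Fin R, (fSlice S k i i).re

/-- σ_max (= σ₁): the largest Fourier-domain diagonal entry of Σ. -/
noncomputable def sigmaMax (S : Tensor R R I₃) : ℝ :=
  ⨆ k : Fin I₃, ⨆ i : Fin R, (fSlice S k i i).re

/-- Condition number κ = σ_max / σ_min. -/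
noncomputable def condNum (S : Tensor R R I₃) : ℝ := sigmaMax S / sigmaMin S

/-- Σ^{1/2}: entrywise square roots in the Fourier domain. -/
noncomputable def sqrtT (S : Tensor R R I₃) : Tensor R R I₃ :=
  invDft fun i j k => (Real.sqrt ((dft S i j k).re) : ℂ)

/-- Σ^{-1/2}: entrywise reciprocal square roots in the Fourier domain. -/
noncomputable def invSqrtT (S : Tensor R R I₃) : Tensor R R I₃ :=
  invDft fun i j k => (((Real.sqrt ((dft S i j k).re))⁻¹ : ℝ) : ℂ)

/-- `Qi` is a two-sided t-product inverse of `Q` (i.e. `Q ∈ GL(R)`). -/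
def TInv (Q Qi : Tensor R R I₃) : Prop :=
  tprod Q Qi = idT R I₃ ∧ tprod Qi Q = idT R I₃

/-- Alignment error (the quantity inside the infimum defining `distT`)
for a given invertible Q with inverse Qi. -/
noncomputable def alignErr (L Ls : Tensor I₁ R I₃) (Rt Rs : Tensor I₂ R I₃)
    (Sh : Tensor R R I₃) (Q Qi : Tensor R R I₃) : ℝ :=
  Real.sqrt ((froNorm (tprod (tprod L Q - Ls) Sh)) ^ 2 +
    (froNorm (tprod (tprod Rt (tT Qi) - Rs) Sh)) ^ 2)

/-- The distance metric dist(L,R;L⋆,R⋆): the infimum of alignment errors over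
invertible tensors Q, where `Sh` is Σ⋆^{1/2}. -/
noncomputable def distT (L Ls : Tensor I₁ R I₃) (Rt Rs : Tensor I₂ R I₃)
    (Sh : Tensor R R I₃) : ℝ :=
  sInf {d : ℝ | ∃ Q Qi : Tensor R R I₃, TInv Q Qi ∧ d = alignErr L Ls Rt Rs Sh Q Qi}

/-- Q (with inverse Qi) is an optimal alignment tensor: it attains the infimum
defining the distance metric. -/
def IsOptAlign (L Ls : Tensor I₁ R I₃) (Rt Rs : Tensor I₂ R I₃)
    (Sh : Tensor R R I₃) (Q Qi : Tensor R R I₃) : Prop :=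
  TInv Q Qi ∧ alignErr L Ls Rt Rs Sh Q Qi = distT L Ls Rt Rs Sh

/-- Entrywise soft-thresholding. -/
noncomputable def softThresh (ζ : ℝ) (A : Tensor I₁ I₂ I₃) : Tensor I₁ I₂ I₃ :=
  fun i j k => Real.sign (A i j k) * max 0 (|A i j k| - ζ)

/-- Support: the set of index triples at which the tensor is nonzero. -/
def supp (A : Tensor I₁ I₂ I₃) : Set (Fin I₁ × Fin I₂ × Fin I₃) :=
  {p | A p.1 p.2.1 p.2.2 ≠ 0}

/-- α-sparsity: every horizontal, lateral and frontal slice has at most an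
α fraction of nonzero entries. -/
def IsSparse (α : ℝ) (S : Tensor I₁ I₂ I₃) : Prop :=
  (∀ i₁ : Fin I₁, ({p : Fin I₂ × Fin I₃ | S i₁ p.1 p.2 ≠ 0}.ncard : ℝ) ≤ α * I₂ * I₃) ∧
  (∀ i₂ : Fin I₂, ({p : Fin I₁ × Fin I₃ | S p.1 i₂ p.2 ≠ 0}.ncard : ℝ) ≤ α * I₁ * I₃) ∧
  (∀ i₃ : Fin I₃, ({p : Fin I₁ × Fin I₂ | S p.1 p.2 i₃ ≠ 0}.ncard : ℝ) ≤ α * I₁ * I₂)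

/-- Tensor μ-incoherence conditions for the skinny t-SVD factors U, V. -/
def Incoherent (μ : ℝ) (U : Tensor I₁ R I₃) (V : Tensor I₂ R I₃) : Prop :=
  twoInfNorm U ≤ Real.sqrt (μ * R / I₁) ∧ twoInfNorm V ≤ Real.sqrt (μ * R / I₂)

/-- Top-R truncated t-SVD of A: a skinny t-SVD-shaped factorization which, in
every Fourier-domain frontal slice, keeps R largest singular values together
with their singular vectors (the residual is orthogonal to the kept singular
vectors and its spectral norm is at most every kept singular value). -/
structure IsTruncTSVD (A : Tensor I₁ I₂ I₃) (U : Tensor I₁ R I₃)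
    (S : Tensor R R I₃) (V : Tensor I₂ R I₃) : Prop where
  orthU : tprod (tT U) U = idT R I₃
  orthV : tprod (tT V) V = idT R I₃
  diag : FDiagNonneg S
  leftOrth : ∀ k, (fSlice U k)ᴴ * (fSlice A k - fSlice (tprod (tprod U S) (tT V)) k) = 0
  rightOrth : ∀ k, (fSlice A k - fSlice (tprod (tprod U S) (tT V)) k) * fSlice V k = 0
  topR : ∀ k, ∀ r : Fin R,
    matSpecNorm (fSlice A k - fSlice (tprod (tprod U S) (tT V)) k) ≤ (fSlice S k r r).re

end RTPCA

open RTPCA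

/-!
Everything is checked one Fourier slice at a time: the DFT along the third mode turns the
t-product into the matrix product and the tensor transpose into the conjugate transpose, while
`Σ⋆`, `Σ⋆^{1/2}`, `Σ⋆^{-1/2}` become positive diagonal matrices `T²`, `T`, `T⁻¹`. On a slice let
`W` be an isometry, `C * B = 1` and `D := (P * C - W * T) * T⁻¹`. Then
`W * T * (B * A - 1) * T = P * (A - C) * T - D * T * (B * A - 1) * T`, and since `W` preserves
norms, `‖T * (B * A - 1) * T‖ ≤ ‖P * (A - C) * T‖ + ‖D‖ * ‖T * (B * A - 1) * T‖`, which
rearranges to the bound. The two inequalities are this estimate for `(W, P, C) = (U⋆, L, Q)` and,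
after transposing, for `(V⋆, R, Q^{-ᵀ})`.
-/

namespace RTPCA

open Complex
open scoped Matrix.Norms.L2Operator

section Fourier

variable (n : ℕ) [NeZero n]

noncomputable def fourierChar : AddChar (Fin n) ℂ :=
  (ZMod.stdAddChar (N := n)).compAddMonoidHom (ZMod.finEquiv n : Fin n →+ ZMod n)

variable {n}

lemma _root_.ZMod.finEquiv_apply (x : Fin n) : ZMod.finEquiv n x = (x.val : ZMod n) := by
  obtain ⟨m, rfl⟩ := Nat.exists_eq_succ_of_ne_zero (NeZero.ne n)
  exact (ZMod.natCast_zmod_val (n := m + 1) x).symm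

lemma fourierChar_mul_apply (k t : Fin n) :
    fourierChar n (k * t) = exp (2 * Real.pi * I * (k : ℕ) * (t : ℕ) / n) := by
  have h : ZMod.finEquiv n (k * t) = (((k : ℕ) * (t : ℕ) : ℕ) : ZMod n) := by
    rw [map_mul, ZMod.finEquiv_apply, ZMod.finEquiv_apply, Nat.cast_mul]
  simp only [fourierChar, AddChar.compAddMonoidHom_apply, AddMonoidHom.coe_coe, h,
    ZMod.stdAddChar_apply, ZMod.toCircle_natCast]
  push_cast; ring_nf

lemma sum_fourierChar_mul (b : Fin n) :
    ∑ t : Fin n, fourierChar n (t * b) = if b = 0 then (n : ℂ) else 0 := by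
  have h := AddChar.sum_mulShift (ZMod.finEquiv n b) (ZMod.isPrimitive_stdAddChar n)
  rw [← (ZMod.finEquiv n).toEquiv.sum_comp] at h
  simpa [fourierChar, map_mul, ZMod.card] using h

lemma dft_eq_sum_fourierChar {I₁ I₂ : ℕ} (A : Tensor I₁ I₂ n) (i : Fin I₁) (j : Fin I₂)
    (k : Fin n) : dft A i j k = ∑ t, (A i j t : ℂ) * fourierChar n (-(k * t)) := by
  simp only [dft, AddChar.map_neg_eq_inv, fourierChar_mul_apply, ← Complex.exp_neg, neg_div]

end Fourier

section Slices

variable {I₁ I₂ I₃ J R : ℕ} [NeZero I₃]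

lemma fSlice_tprod (A : Tensor I₁ I₂ I₃) (B : Tensor I₂ J I₃) (k : Fin I₃) :
    fSlice (tprod A B) k = fSlice A k * fSlice B k := by
  ext i j
  simp only [fSlice, Matrix.mul_apply, Matrix.of_apply, dft_eq_sum_fourierChar, tprod]
  push_cast
  simp only [Finset.sum_mul, Finset.mul_sum]
  rw [Finset.sum_comm]
  refine Finset.sum_congr rfl fun l _ => ?_
  conv_lhs => rw [Finset.sum_comm]
  conv_rhs => rw [Finset.sum_comm]
  refine Finset.sum_congr rfl fun t _ => ?_
  refine Fintype.sum_equiv (Equiv.subRight t) _ _ fun u => ?_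
  rw [Equiv.subRight_apply, show -(k * u) = -(k * (u - t)) + -(k * t) by rw [mul_sub]; abel,
    AddChar.map_add_eq_mul]
  ring

lemma fSlice_tT (A : Tensor I₁ I₂ I₃) (k : Fin I₃) : fSlice (tT A) k = (fSlice A k)ᴴ := by
  ext j i
  simp only [fSlice, Matrix.conjTranspose_apply, Matrix.of_apply, dft_eq_sum_fourierChar, tT,
    star_sum, star_mul', Complex.star_def, Complex.conj_ofReal, ← AddChar.map_neg_eq_conj, neg_neg]
  exact Fintype.sum_equiv (Equiv.neg _) _ _ fun t => by simp

lemma fSlice_sub (A B : Tensor I₁ I₂ I₃) (k : Fin I₃) :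
    fSlice (A - B) k = fSlice A k - fSlice B k := by
  ext i j
  simp [fSlice, dft_eq_sum_fourierChar, sub_mul]

lemma fSlice_idT (k : Fin I₃) : fSlice (idT R I₃) k = 1 := by
  ext i j
  rw [fSlice, Matrix.of_apply, dft_eq_sum_fourierChar, Finset.sum_eq_single 0]
  · simp only [idT, Fin.val_zero, and_true, Matrix.one_apply]
    split_ifs <;> simp
  · intro t _ ht
    simp [idT, Fin.val_eq_zero_iff, ht]
  · simp

lemma dft_neg (A : Tensor I₁ I₂ I₃) (i : Fin I₁) (j : Fin I₂) (k : Fin I₃) :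
    dft A i j (-k) = starRingEnd ℂ (dft A i j k) := by
  simp [dft_eq_sum_fourierChar, ← AddChar.map_neg_eq_conj]

lemma invDft_apply_eq (F : Fin I₁ → Fin I₂ → Fin I₃ → ℂ)
    (hF : ∀ i j k, F i j (-k) = starRingEnd ℂ (F i j k)) (i : Fin I₁) (j : Fin I₂) (t : Fin I₃) :
    (invDft F i j t : ℂ) = (∑ m, F i j m * fourierChar I₃ (m * t)) / I₃ := by
  set z := ∑ m, F i j m * fourierChar I₃ (m * t)
  have hz : starRingEnd ℂ z = z := by
    simp only [z, map_sum, map_mul, ← AddChar.map_neg_eq_conj, ← hF]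
    exact Fintype.sum_equiv (Equiv.neg _) _ _ fun m => by simp
  have h : invDft F i j t = (z / I₃).re := by
    simp only [invDft, z, fourierChar_mul_apply]
  rw [h, Complex.conj_eq_iff_re.mp (by rw [map_div₀, hz, Complex.conj_natCast])]

lemma sum_fourierChar_mul_mul_neg (m k : Fin I₃) :
    ∑ t, fourierChar I₃ (m * t) * fourierChar I₃ (-(k * t)) = if m = k then (I₃ : ℂ) else 0 := by
  have h : ∀ t, m * t + -(k * t) = t * (m - k) := fun t => by
    rw [mul_sub, mul_comm t m, mul_comm t k, sub_eq_add_neg]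
  simp only [← AddChar.map_add_eq_mul, h, sum_fourierChar_mul, sub_eq_zero]

lemma fSlice_invDft (F : Fin I₁ → Fin I₂ → Fin I₃ → ℂ)
    (hF : ∀ i j k, F i j (-k) = starRingEnd ℂ (F i j k)) (k : Fin I₃) :
    fSlice (invDft F) k = Matrix.of fun i j => F i j k := by
  ext i j
  simp only [fSlice, Matrix.of_apply, dft_eq_sum_fourierChar, invDft_apply_eq F hF]
  calc _ = (∑ m, F i j m * ∑ t, fourierChar I₃ (m * t) * fourierChar I₃ (-(k * t))) / I₃ := by
        simp only [Finset.mul_sum, Finset.sum_div, Finset.sum_mul]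
        rw [Finset.sum_comm]
        exact Finset.sum_congr rfl fun _ _ => Finset.sum_congr rfl fun _ _ => by ring
    _ = F i j k := by simp [sum_fourierChar_mul_mul_neg, NeZero.ne]

end Slices

section FDiagPos

variable {I₃ R : ℕ} {S : Tensor R R I₃}

lemma FDiagPos.fSlice_eq_diagonal (hS : FDiagPos S) (k : Fin I₃) :
    fSlice S k = Matrix.diagonal fun i => ((fSlice S k i i).re : ℂ) := by
  ext i j
  rcases eq_or_ne i j with rfl | hij
  · rw [Matrix.diagonal_apply_eq]
    exact Complex.ext (by simp) (by simp [(hS.2 k i).2])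
  · rw [Matrix.diagonal_apply_ne _ hij, hS.1 k i j hij]

variable [NeZero I₃]

lemma FDiagPos.fSlice_invDft_comp_re (hS : FDiagPos S) {f : ℝ → ℝ} (hf : f 0 = 0) (k : Fin I₃) :
    fSlice (invDft fun i j k => (f (dft S i j k).re : ℂ)) k
      = Matrix.diagonal fun i => (f (fSlice S k i i).re : ℂ) := by
  rw [fSlice_invDft _ (fun i j k => by rw [dft_neg, Complex.conj_re, Complex.conj_ofReal]) k]
  ext i j
  rcases eq_or_ne i j with rfl | hij
  · simp [fSlice]
  · have h0 : dft S i j k = 0 := hS.1 k i j hij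
    simp [Matrix.diagonal_apply_ne _ hij, h0, hf]

lemma FDiagPos.fSlice_sqrtT (hS : FDiagPos S) (k : Fin I₃) :
    fSlice (sqrtT S) k = Matrix.diagonal fun i => (√(fSlice S k i i).re : ℂ) :=
  hS.fSlice_invDft_comp_re Real.sqrt_zero k

lemma FDiagPos.fSlice_invSqrtT (hS : FDiagPos S) (k : Fin I₃) :
    fSlice (invSqrtT S) k = Matrix.diagonal fun i => ((√(fSlice S k i i).re)⁻¹ : ℂ) := by
  -- the junk value `(√0)⁻¹ = 0` keeps the off-diagonal zeros
  rw [invSqrtT, hS.fSlice_invDft_comp_re (f := fun x => (√x)⁻¹) (by simp)]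
  push_cast; rfl

lemma FDiagPos.fSlice_sqrtT_mul_self (hS : FDiagPos S) (k : Fin I₃) :
    fSlice (sqrtT S) k * fSlice (sqrtT S) k = fSlice S k := by
  rw [hS.fSlice_sqrtT, Matrix.diagonal_mul_diagonal]
  conv_rhs => rw [hS.fSlice_eq_diagonal k]
  congr 1
  ext i
  rw [← Complex.ofReal_mul, Real.mul_self_sqrt (hS.2 k i).1.le]

lemma FDiagPos.fSlice_invSqrtT_mul_sqrtT (hS : FDiagPos S) (k : Fin I₃) :
    fSlice (invSqrtT S) k * fSlice (sqrtT S) k = 1 := by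
  rw [hS.fSlice_sqrtT, hS.fSlice_invSqrtT, Matrix.diagonal_mul_diagonal, ← Matrix.diagonal_one]
  congr 1
  ext i
  have : (√(fSlice S k i i).re : ℂ) ≠ 0 := by exact_mod_cast (Real.sqrt_pos.2 (hS.2 k i).1).ne'
  exact inv_mul_cancel₀ this

lemma FDiagPos.conjTranspose_fSlice_sqrtT (hS : FDiagPos S) (k : Fin I₃) :
    (fSlice (sqrtT S) k)ᴴ = fSlice (sqrtT S) k := by
  simp [hS.fSlice_sqrtT, Matrix.diagonal_conjTranspose]

end FDiagPos

section Transpose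

variable {I₁ I₂ I₃ J R : ℕ}

lemma tT_tT (A : Tensor I₁ I₂ I₃) : tT (tT A) = A := by
  ext i j k
  have : NeZero I₃ := ⟨k.pos.ne'⟩
  simp [tT]

lemma tT_tprod (A : Tensor I₁ I₂ I₃) (B : Tensor I₂ J I₃) :
    tT (tprod A B) = tprod (tT B) (tT A) := by
  ext j i k
  have : NeZero I₃ := ⟨k.pos.ne'⟩
  simp only [tT, tprod]
  refine Finset.sum_congr rfl fun l _ => Fintype.sum_equiv (Equiv.addLeft k) _ _ fun t => ?_
  simp only [Equiv.coe_addLeft, neg_add, neg_neg, sub_eq_add_neg, neg_add_cancel_left, mul_comm]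

lemma tT_idT : tT (idT R I₃) = idT R I₃ := by
  ext i j k
  have : NeZero I₃ := ⟨k.pos.ne'⟩
  simp [tT, idT, Fin.val_eq_zero_iff, eq_comm]

end Transpose

section Norms

variable {I₁ I₂ I₃ : ℕ}

lemma norm_fSlice_le_specNorm (A : Tensor I₁ I₂ I₃) (k : Fin I₃) : ‖fSlice A k‖ ≤ specNorm A :=
  le_ciSup (f := fun k => matSpecNorm (fSlice A k)) (Set.finite_range _).bddAbove k

lemma specNorm_nonneg (A : Tensor I₁ I₂ I₃) : 0 ≤ specNorm A :=
  Real.iSup_nonneg fun _ => norm_nonneg _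

lemma specNorm_le {A : Tensor I₁ I₂ I₃} {c : ℝ} (hc : 0 ≤ c) (h : ∀ k, ‖fSlice A k‖ ≤ c) :
    specNorm A ≤ c :=
  Real.iSup_le h hc

variable {𝕜 : Type*} [RCLike 𝕜] {m n p : Type*} [Fintype m] [Fintype n] [Fintype p]
  [DecidableEq n] [DecidableEq p]

lemma norm_mul_of_conjTranspose_mul_self_eq_one {W : Matrix m n 𝕜} (hW : Wᴴ * W = 1)
    (X : Matrix n p 𝕜) : ‖W * X‖ = ‖X‖ := by
  have h := Matrix.l2_opNorm_conjTranspose_mul_self (W * X)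
  rw [Matrix.conjTranspose_mul, Matrix.mul_assoc, ← Matrix.mul_assoc Wᴴ, hW, Matrix.one_mul,
    Matrix.l2_opNorm_conjTranspose_mul_self] at h
  exact (mul_self_inj_of_nonneg (norm_nonneg _) (norm_nonneg _)).mp h.symm

lemma norm_mul_mul_sub_one_mul_le {W P : Matrix m n 𝕜} {A B C T T' : Matrix n n 𝕜}
    (hW : Wᴴ * W = 1) (hCB : C * B = 1) (hT : T' * T = 1) (hε : ‖(P * C - W * T) * T'‖ < 1) :
    ‖T * (B * A - 1) * T‖ ≤ ‖P * (A - C) * T‖ / (1 - ‖(P * C - W * T) * T'‖) := by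
  set D := (P * C - W * T) * T'
  set M := T * (B * A - 1) * T
  have hWT : W * T = P * C - D * T := by
    rw [Matrix.mul_assoc, hT, Matrix.mul_one, sub_sub_cancel]
  have hWM : W * M = P * (A - C) * T - D * M := by
    calc W * M = (W * T) * (B * A - 1) * T := by simp only [M, Matrix.mul_assoc]
      _ = P * (C * B * A - C) * T - D * M := by
        rw [hWT]
        simp only [M, Matrix.sub_mul, Matrix.mul_sub, Matrix.mul_assoc, Matrix.mul_one,
          Matrix.one_mul]
        abel
      _ = P * (A - C) * T - D * M := by rw [hCB, Matrix.one_mul]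
  have hM : ‖M‖ ≤ ‖P * (A - C) * T‖ + ‖D‖ * ‖M‖ :=
    calc ‖M‖ = ‖P * (A - C) * T - D * M‖ := by
          rw [← hWM, norm_mul_of_conjTranspose_mul_self_eq_one hW]
      _ ≤ ‖P * (A - C) * T‖ + ‖D * M‖ := norm_sub_le _ _
      _ ≤ ‖P * (A - C) * T‖ + ‖D‖ * ‖M‖ := by gcongr; exact Matrix.l2_opNorm_mul _ _
  rw [le_div_iff₀ (sub_pos.2 hε)]
  linarith

end Norms

lemma specNorm_sqrtT_mul_tT_mul_tT_mul_sqrtT_sub_le {I₂ I₃ R : ℕ} {S : Tensor R R I₃}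
    (hS : FDiagPos S) {V P : Tensor I₂ R I₃} (hV : tprod (tT V) V = idT R I₃)
    {A B C : Tensor R R I₃} (hCB : tprod C B = idT R I₃)
    (hε : specNorm (tprod (tprod P C - tprod V (sqrtT S)) (invSqrtT S)) < 1) :
    specNorm (tprod (tprod (tprod (sqrtT S) (tT A)) (tT B)) (sqrtT S) - S)
      ≤ specNorm (tprod (tprod P (A - C)) (sqrtT S))
        / (1 - specNorm (tprod (tprod P C - tprod V (sqrtT S)) (invSqrtT S))) := by
  refine specNorm_le (div_nonneg (specNorm_nonneg _) (sub_nonneg.2 hε.le)) fun k => ?_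
  have : NeZero I₃ := ⟨k.pos.ne'⟩
  have hCBk : fSlice C k * fSlice B k = 1 := by
    rw [← fSlice_tprod, hCB, fSlice_idT]
  have hVk : (fSlice V k)ᴴ * fSlice V k = 1 := by
    rw [← fSlice_tT, ← fSlice_tprod, hV, fSlice_idT]
  have hconj : (fSlice (tprod (tprod (tprod (sqrtT S) (tT A)) (tT B)) (sqrtT S) - S) k)ᴴ
      = fSlice (sqrtT S) k * (fSlice B k * fSlice A k - 1) * fSlice (sqrtT S) k := by
    simp only [fSlice_sub, fSlice_tprod, fSlice_tT, Matrix.conjTranspose_sub,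
      Matrix.conjTranspose_mul, Matrix.conjTranspose_conjTranspose,
      hS.conjTranspose_fSlice_sqrtT, ← hS.fSlice_sqrtT_mul_self]
    noncomm_ring
  have hNk := norm_fSlice_le_specNorm (tprod (tprod P (A - C)) (sqrtT S)) k
  have hεk := norm_fSlice_le_specNorm (tprod (tprod P C - tprod V (sqrtT S)) (invSqrtT S)) k
  simp only [fSlice_tprod, fSlice_sub] at hNk hεk
  rw [← Matrix.l2_opNorm_conjTranspose, hconj]
  refine (norm_mul_mul_sub_one_mul_le hVk hCBk
    (hS.fSlice_invSqrtT_mul_sqrtT k) (hεk.trans_lt hε)).trans ?_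
  exact div_le_div₀ (specNorm_nonneg _) hNk (sub_pos.2 hε) (sub_le_sub_left hεk 1)

end RTPCA

theorem alignment_perturbation_general
    {I₁ I₂ I₃ R : ℕ}
    (Xs : Tensor I₁ I₂ I₃) (Us : Tensor I₁ R I₃) (Sig : Tensor R R I₃) (Vs : Tensor I₂ R I₃)
    (hsvd : IsSkinnyTSVD Xs Us Sig Vs)
    (L : Tensor I₁ R I₃) (Rt : Tensor I₂ R I₃)
    (Q Qi Qt Qti : Tensor R R I₃)
    (hQ : TInv Q Qi)
    (h : max (specNorm (tprod (tprod L Q - tprod Us (sqrtT Sig)) (invSqrtT Sig)))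
             (specNorm (tprod (tprod Rt (tT Qi) - tprod Vs (sqrtT Sig)) (invSqrtT Sig))) < 1) :
    specNorm (tprod (tprod (tprod (sqrtT Sig) Qti) Q) (sqrtT Sig) - Sig)
      ≤ specNorm (tprod (tprod Rt (tT Qti - tT Qi)) (sqrtT Sig))
        / (1 - specNorm (tprod (tprod Rt (tT Qi) - tprod Vs (sqrtT Sig)) (invSqrtT Sig))) ∧
    specNorm (tprod (tprod (tprod (sqrtT Sig) (tT Qt)) (tT Qi)) (sqrtT Sig) - Sig)
      ≤ specNorm (tprod (tprod L (Qt - Q)) (sqrtT Sig))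
        / (1 - specNorm (tprod (tprod L Q - tprod Us (sqrtT Sig)) (invSqrtT Sig))) := by
  have hQiT : tprod (tT Qi) (tT Q) = idT R I₃ := by rw [← tT_tprod, hQ.1, tT_idT]
  constructor
  · simpa only [tT_tT] using specNorm_sqrtT_mul_tT_mul_tT_mul_sqrtT_sub_le (A := tT Qti)
      hsvd.diag hsvd.orthV hQiT ((le_max_right _ _).trans_lt h)
  · exact specNorm_sqrtT_mul_tT_mul_tT_mul_sqrtT_sub_le hsvd.diag hsvd.orthU hQ.1
      ((le_max_left _ _).trans_lt h)

/-- perturbation bounds for the alignment tensor. -/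
theorem alignment_perturbation
    {I₁ I₂ I₃ R : ℕ}
    (Xs : Tensor I₁ I₂ I₃) (Us : Tensor I₁ R I₃) (Sig : Tensor R R I₃) (Vs : Tensor I₂ R I₃)
    (hsvd : IsSkinnyTSVD Xs Us Sig Vs)
    (L : Tensor I₁ R I₃) (Rt : Tensor I₂ R I₃)
    (Q Qi Qt Qti : Tensor R R I₃)
    (hQ : TInv Q Qi) (hQt : TInv Qt Qti)
    (h : max (specNorm (tprod (tprod L Q - tprod Us (sqrtT Sig)) (invSqrtT Sig)))
             (specNorm (tprod (tprod Rt (tT Qi) - tprod Vs (sqrtT Sig)) (invSqrtT Sig))) < 1) :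
    specNorm (tprod (tprod (tprod (sqrtT Sig) Qti) Q) (sqrtT Sig) - Sig)
      ≤ specNorm (tprod (tprod Rt (tT Qti - tT Qi)) (sqrtT Sig))
        / (1 - specNorm (tprod (tprod Rt (tT Qi) - tprod Vs (sqrtT Sig)) (invSqrtT Sig))) ∧
    specNorm (tprod (tprod (tprod (sqrtT Sig) (tT Qt)) (tT Qi)) (sqrtT Sig) - Sig)
      ≤ specNorm (tprod (tprod L (Qt - Q)) (sqrtT Sig))
        / (1 - specNorm (tprod (tprod L Q - tprod Us (sqrtT Sig)) (invSqrtT Sig))) :=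
  alignment_perturbation_general Xs Us Sig Vs hsvd L Rt Q Qi Qt Qti hQ h
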